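/- arXiv:1303.3626 — 6 statements merged into one kernel-verified Lean document; each statement's English description precedes it below -/
import Mathlib

section
/- In a valid Patricia trie the label of a node determines its position: if `subtreeAt t π₁ = some u₁`, `subtreeAt t π₂ = some u₂`, and `lbl u₁ = lbl u₂`, then `π₁ = π₂` (and hence `u₁ = u₂`). In particular all node labels of a valid trie are pairwise distinct and every non-root node has a unique parent. (The paper's Lemma `no-same-node-lem`/`reachable-parent-lem`.) -/
inductive PTrie : Type
  | leaf (s : List Bool) : PTrie
  | node (s : List Bool) (l r : PTrie) : PTrie

/-- Label at the root of a trie. -/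
def lbl : PTrie → List Bool
  | .leaf s => s
  | .node s _ _ => s

/-- A trie is valid if for every internal node `node s l r`,
`s ++ [false]` is a prefix of `lbl l` and `s ++ [true]` is a prefix of `lbl r`. -/
def Valid : PTrie → Prop
  | .leaf _ => True
  | .node s l r => ((s ++ [false]) <+: lbl l) ∧ ((s ++ [true]) <+: lbl r) ∧ Valid l ∧ Valid r

/-- Subtree at a position: descend left on `false`, right on `true`. -/
def subtreeAt : PTrie → List Bool → Option PTrie
  | t, [] => some t
  | .leaf _, _ :: _ => none
  | .node _ l r, b :: π => subtreeAt (if b then r else l) π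

/-- Set of binary strings appearing at the leaves. -/
def leafLabels : PTrie → Set (List Bool)
  | .leaf s => {s}
  | .node _ l r => leafLabels l ∪ leafLabels r

/-- Sequential search. -/
def search (v : List Bool) : PTrie → PTrie
  | .leaf s => .leaf s
  | .node s l r =>
    if s <+: v ∧ s ≠ v then
      (if v.getD s.length false then search v r else search v l)
    else .node s l r

/-- Position of the node returned by `search`. -/
def searchPos (v : List Bool) : PTrie → List Bool
  | .leaf _ => []
  | .node s l r =>
    if s <+: v ∧ s ≠ v then
      (if v.getD s.length false then true :: searchPos v r else false :: searchPos v l)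
    else []

/-- Replace the subtree at a position. -/
def replaceAt : PTrie → List Bool → PTrie → PTrie
  | _, [], u => u
  | .leaf s, _ :: _, _ => .leaf s
  | .node s l r, b :: π, u =>
    if b then .node s l (replaceAt r π u) else .node s (replaceAt l π u) r

/-- Longest common prefix of two binary strings. -/
def lcp : List Bool → List Bool → List Bool
  | a :: as, b :: bs => if a = b then a :: lcp as bs else []
  | _, _ => []

/-- Join two tries under a new internal node labelled by the
longest common prefix of their labels. -/
def join (t₁ t₂ : PTrie) : PTrie :=
  if (lbl t₁).getD (lcp (lbl t₁) (lbl t₂)).length true then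
    .node (lcp (lbl t₁) (lbl t₂)) t₂ t₁
  else
    .node (lcp (lbl t₁) (lbl t₂)) t₁ t₂

/-- Sequential insert. -/
def insertT (v : List Bool) : PTrie → PTrie
  | .node s l r =>
    if s <+: v ∧ s ≠ v then
      (if v.getD s.length false then .node s l (insertT v r) else .node s (insertT v l) r)
    else join (.node s l r) (.leaf v)
  | .leaf s => join (.leaf s) (.leaf v)

/-! Along a descent in a valid trie labels grow by at least one bit per step, and the bit that
follows the parent's label is the direction taken. So a label cannot occur both at a node and
strictly below it, and two occurrences of one label branch the same way at every common ancestor. -/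

lemma lbl_prefix_of_subtreeAt {t u : PTrie} {π : List Bool} (hv : Valid t)
    (h : subtreeAt t π = some u) : lbl t <+: lbl u := by
  induction π generalizing t with
  | nil => cases h; exact List.prefix_rfl
  | cons b π ih =>
    cases t with
    | leaf => simp [subtreeAt] at h
    | node s l r =>
      obtain ⟨hl, hr, hvl, hvr⟩ := hv
      cases b
      · exact (List.prefix_append _ _).trans (hl.trans (ih hvl h))
      · exact (List.prefix_append _ _).trans (hr.trans (ih hvr h))

lemma lbl_append_prefix_of_subtreeAt_cons {t u : PTrie} {b : Bool} {π : List Bool}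
    (hv : Valid t) (h : subtreeAt t (b :: π) = some u) : lbl t ++ [b] <+: lbl u := by
  cases t with
  | leaf => simp [subtreeAt] at h
  | node s l r =>
    obtain ⟨hl, hr, hvl, hvr⟩ := hv
    cases b
    · exact hl.trans (lbl_prefix_of_subtreeAt hvl h)
    · exact hr.trans (lbl_prefix_of_subtreeAt hvr h)

lemma lbl_ne_of_subtreeAt_cons {t u : PTrie} {b : Bool} {π : List Bool}
    (hv : Valid t) (h : subtreeAt t (b :: π) = some u) : lbl u ≠ lbl t := by
  intro heq
  have := (lbl_append_prefix_of_subtreeAt_cons hv h).length_le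
  simp [heq] at this

lemma eq_of_append_singleton_prefix {α : Type*} {s L : List α} {a b : α}
    (ha : s ++ [a] <+: L) (hb : s ++ [b] <+: L) : a = b := by
  have hab : s ++ [a] = s ++ [b] :=
    (List.prefix_of_prefix_length_le ha hb (by simp)).eq_of_length (by simp)
  simpa using hab

lemma pos_eq_of_subtreeAt_of_lbl_eq {t u₁ u₂ : PTrie} {π₁ π₂ : List Bool} (hv : Valid t)
    (h1 : subtreeAt t π₁ = some u₁) (h2 : subtreeAt t π₂ = some u₂)
    (hl : lbl u₁ = lbl u₂) : π₁ = π₂ := by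
  induction π₁ generalizing t π₂ with
  | nil =>
    cases π₂ with
    | nil => rfl
    | cons b π₂ =>
      cases h1
      exact absurd hl.symm (lbl_ne_of_subtreeAt_cons hv h2)
  | cons b₁ π₁ ih =>
    cases π₂ with
    | nil =>
      cases h2
      exact absurd hl (lbl_ne_of_subtreeAt_cons hv h1)
    | cons b₂ π₂ =>
      have hb : b₁ = b₂ := eq_of_append_singleton_prefix
        (hl ▸ lbl_append_prefix_of_subtreeAt_cons hv h1)
        (lbl_append_prefix_of_subtreeAt_cons hv h2)
      subst hb
      cases t with
      | leaf => simp [subtreeAt] at h1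
      | node s l r =>
        obtain ⟨-, -, hvl, hvr⟩ := hv
        cases b₁
        · rw [ih hvl h1 h2]
        · rw [ih hvr h1 h2]

/-- In a valid Patricia trie the label of a node determines its position
(the paper's Lemmas `no-same-node-lem` / `reachable-parent-lem`). -/
theorem label_determines_position (t u₁ u₂ : PTrie) (π₁ π₂ : List Bool)
    (hv : Valid t)
    (h1 : subtreeAt t π₁ = some u₁) (h2 : subtreeAt t π₂ = some u₂)
    (hl : lbl u₁ = lbl u₂) :
    π₁ = π₂ ∧ u₁ = u₂ := by
  obtain rfl := pos_eq_of_subtreeAt_of_lbl_eq hv h1 h2 hl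
  exact ⟨rfl, Option.some.inj (h1.symm.trans h2)⟩
end

section
/- Let `t` be a valid Patricia trie in which every leaf label has length `ℓ`, and let `v : List Bool` with `|v| = ℓ`. Then `v ∈ leafLabels t` if and only if `search v t = leaf v`. (Sequential membership correctness of the paper's search operation: Lemmas `post-con-search-lem` and `search-val-not-in-trie-lem`.) -/
/-!
Validity makes the label of every node a proper prefix of each leaf below it, and the bit of a
leaf just after the label of an internal node says in which subtree the leaf lies. So a leaf `v`
of `t` is reached by `search v t`, while if `v` is not a leaf label, `search` either stops at an
internal node or at a leaf whose label differs from `v`.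
-/

theorem List.IsPrefix.getD_length_of_append_singleton {α : Type*} {s v : List α} {a d : α}
    (h : s ++ [a] <+: v) : v.getD s.length d = a := by
  obtain ⟨u, rfl⟩ := h
  simp

theorem Valid.lbl_prefix_of_mem_leafLabels :
    ∀ {t : PTrie} {v : List Bool}, Valid t → v ∈ leafLabels t → lbl t <+: v
  | .leaf _, _, _, hv => by rw [Set.mem_singleton_iff.mp hv]; rfl
  | .node _ _ _, _, ⟨hl, hr, hvl, hvr⟩, hv => by
    rcases hv with hv | hv
    · exact (List.prefix_append _ _).trans (hl.trans (hvl.lbl_prefix_of_mem_leafLabels hv))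
    · exact (List.prefix_append _ _).trans (hr.trans (hvr.lbl_prefix_of_mem_leafLabels hv))

section Node

variable {s : List Bool} {l r : PTrie} {v : List Bool}

theorem Valid.append_false_prefix_of_mem_left (h : Valid (.node s l r))
    (hv : v ∈ leafLabels l) : s ++ [false] <+: v :=
  h.1.trans (h.2.2.1.lbl_prefix_of_mem_leafLabels hv)

theorem Valid.append_true_prefix_of_mem_right (h : Valid (.node s l r))
    (hv : v ∈ leafLabels r) : s ++ [true] <+: v :=
  h.2.1.trans (h.2.2.2.lbl_prefix_of_mem_leafLabels hv)

theorem Valid.lbl_ne_of_mem_leafLabels (h : Valid (.node s l r))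
    (hv : v ∈ leafLabels (.node s l r)) : s ≠ v := by
  obtain ⟨b, hb⟩ : ∃ b, s ++ [b] <+: v := by
    rcases hv with hv | hv
    · exact ⟨false, h.append_false_prefix_of_mem_left hv⟩
    · exact ⟨true, h.append_true_prefix_of_mem_right hv⟩
  rintro rfl
  simpa using hb.length_le

end Node

theorem search_correct_general (t : PTrie) (hv : Valid t)
    (v : List Bool) :
    v ∈ leafLabels t ↔ search v t = PTrie.leaf v := by
  induction t with
  | leaf s => simp [leafLabels, search, eq_comm]
  | node s l r ihl ihr =>
    by_cases hdescend : s <+: v ∧ s ≠ v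
    · rw [search, if_pos hdescend]
      cases hb : v.getD s.length false
      · rw [if_neg Bool.false_ne_true, ← ihl hv.2.2.1]
        refine ⟨fun hmem => hmem.resolve_right fun hr => Bool.false_ne_true ?_, Or.inl⟩
        rw [← hb, (hv.append_true_prefix_of_mem_right hr).getD_length_of_append_singleton]
      · rw [if_pos rfl, ← ihr hv.2.2.2]
        refine ⟨fun hmem => hmem.resolve_left fun hl => Bool.false_ne_true ?_, Or.inr⟩
        rw [← hb, (hv.append_false_prefix_of_mem_left hl).getD_length_of_append_singleton]
    · rw [search, if_neg hdescend]
      refine iff_of_false (fun hmem => hdescend ?_) PTrie.noConfusion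
      exact ⟨hv.lbl_prefix_of_mem_leafLabels hmem, hv.lbl_ne_of_mem_leafLabels hmem⟩

/-- Sequential membership correctness of the search operation. -/
theorem search_correct (t : PTrie) (ℓ : ℕ) (hv : Valid t)
    (hleaf : ∀ s ∈ leafLabels t, s.length = ℓ)
    (v : List Bool) (hvlen : v.length = ℓ) :
    v ∈ leafLabels t ↔ search v t = PTrie.leaf v :=
  search_correct_general t hv v
end

section
/- Let `t` be a valid Patricia trie and `v : List Bool`. For every proper prefix `π'` of `searchPos v t`, the subtree of `t` at position `π'` is an internal node whose label is a proper prefix of `v`, and the entry of `searchPos v t` at index `|π'|` equals the bit of `v` at index equal to the length of that node's label. (Post-conditions (3) and (5) of the paper's search operation, Lemma `search-lem`.) -/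
theorem searchPos_node_of_isProperPrefix {v s : List Bool} {l r : PTrie} (hs : s <+: v ∧ s ≠ v) :
    searchPos v (.node s l r) =
      v.getD s.length false :: searchPos v (if v.getD s.length false then r else l) := by
  rw [searchPos, if_pos hs]
  split <;> simp_all

theorem searchPos_node_of_not_isProperPrefix {v s : List Bool} {l r : PTrie}
    (hs : ¬(s <+: v ∧ s ≠ v)) : searchPos v (.node s l r) = [] := by
  rw [searchPos, if_neg hs]

theorem searchPos_spec_general (t : PTrie) (v : List Bool)
    (π' : List Bool) (hpre : π' <+: searchPos v t) (hne : π' ≠ searchPos v t) :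
    ∃ (s : List Bool) (l r : PTrie),
      subtreeAt t π' = some (PTrie.node s l r) ∧
      s <+: v ∧ s ≠ v ∧
      (searchPos v t).getD π'.length false = v.getD s.length false := by
  induction t generalizing π' with
  | leaf s => exact absurd (List.prefix_nil.mp hpre) hne
  | node s l r ihl ihr =>
    by_cases hs : s <+: v ∧ s ≠ v
    swap
    · rw [searchPos_node_of_not_isProperPrefix hs] at hpre hne
      exact absurd (List.prefix_nil.mp hpre) hne
    rw [searchPos_node_of_isProperPrefix hs] at hpre hne ⊢
    rcases π' with _ | ⟨b, π'⟩
    · exact ⟨s, l, r, rfl, hs.1, hs.2, rfl⟩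
    obtain ⟨rfl, hπ'⟩ := List.cons_prefix_cons.mp hpre
    replace hne : π' ≠ _ := fun h => hne (congrArg _ h)
    generalize v.getD s.length false = b at hπ' hne ⊢
    cases b
    · exact ihl π' hπ' hne
    · exact ihr π' hπ' hne

/-- Post-conditions (3) and (5) of the search operation: every node passed
through by the search is an internal node whose label is a proper prefix of
`v`, and the search descends into the child given by the corresponding bit
of `v`. -/
theorem searchPos_spec (t : PTrie) (hv : Valid t) (v : List Bool)
    (π' : List Bool) (hpre : π' <+: searchPos v t) (hne : π' ≠ searchPos v t) :
    ∃ (s : List Bool) (l r : PTrie),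
      subtreeAt t π' = some (PTrie.node s l r) ∧
      s <+: v ∧ s ≠ v ∧
      (searchPos v t).getD π'.length false = v.getD s.length false :=
  searchPos_spec_general t v π' hpre hne
end

section
/- Let `t₁, t₂` be valid Patricia tries such that neither of `lbl t₁`, `lbl t₂` is a prefix of the other. Then `join t₁ t₂` is valid, `lbl (join t₁ t₂)` is the longest common prefix of `lbl t₁` and `lbl t₂`, and `leafLabels (join t₁ t₂) = leafLabels t₁ ∪ leafLabels t₂`. (Correctness of the paper's `createNode` routine, which builds a new internal node labelled by the longest common prefix of its two children's labels.) -/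
theorem prefix_lcp_iff : ∀ {c a b : List Bool}, c <+: lcp a b ↔ c <+: a ∧ c <+: b
  | [], _, _ => by simp
  | _ :: _, [], _ => by simp [lcp]
  | _ :: _, _ :: _, [] => by simp [lcp]
  | z :: c, x :: a, y :: b => by
    by_cases hxy : x = y
    · subst hxy
      simp only [lcp, if_pos, List.cons_prefix_cons, prefix_lcp_iff]
      tauto
    · simp only [lcp, if_neg hxy, List.prefix_nil, reduceCtorEq, false_iff,
        List.cons_prefix_cons]
      rintro ⟨⟨rfl, -⟩, rfl, -⟩
      exact hxy rfl

theorem exists_eq_lcp_append_of_not_prefix : ∀ {a b : List Bool}, ¬ a <+: b → ¬ b <+: a →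
    ∃ (x : Bool) (a' b' : List Bool), a = lcp a b ++ x :: a' ∧ b = lcp a b ++ (!x) :: b'
  | [], _, hab, _ => absurd List.nil_prefix hab
  | _ :: _, [], _, hba => absurd List.nil_prefix hba
  | x :: a, y :: b, hab, hba => by
    by_cases hxy : x = y
    · subst hxy
      obtain ⟨z, a', b', ha, hb⟩ := exists_eq_lcp_append_of_not_prefix
        (mt (List.prefix_cons_inj x).mpr hab) (mt (List.prefix_cons_inj x).mpr hba)
      exact ⟨z, a', b', by simp [lcp, ← ha], by simp [lcp, ← hb]⟩
    · obtain rfl : y = !x := by cases x <;> cases y <;> simp_all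
      exact ⟨x, a, b, by simp [lcp], by simp [lcp]⟩

theorem lbl_join (t₁ t₂ : PTrie) : lbl (join t₁ t₂) = lcp (lbl t₁) (lbl t₂) := by
  unfold join; split <;> rfl

theorem leafLabels_join (t₁ t₂ : PTrie) :
    leafLabels (join t₁ t₂) = leafLabels t₁ ∪ leafLabels t₂ := by
  unfold join; split
  · exact Set.union_comm _ _
  · rfl

theorem valid_join {t₁ t₂ : PTrie} (h1 : Valid t₁) (h2 : Valid t₂)
    (h12 : ¬ lbl t₁ <+: lbl t₂) (h21 : ¬ lbl t₂ <+: lbl t₁) : Valid (join t₁ t₂) := by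
  obtain ⟨x, a', b', ha, hb⟩ := exists_eq_lcp_append_of_not_prefix h12 h21
  set p := lcp (lbl t₁) (lbl t₂)
  have hx1 : p ++ [x] <+: lbl t₁ := ⟨a', by simp [ha]⟩
  have hx2 : p ++ [!x] <+: lbl t₂ := ⟨b', by simp [hb]⟩
  have hbit : (lbl t₁).getD p.length true = x := by rw [ha]; simp
  unfold join
  rw [hbit]
  cases x
  · exact ⟨hx1, hx2, h1, h2⟩
  · exact ⟨hx2, hx1, h2, h1⟩

/-- Correctness of `join` (the paper's `createNode` routine). -/
theorem join_correct (t₁ t₂ : PTrie) (h1 : Valid t₁) (h2 : Valid t₂)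
    (h12 : ¬ (lbl t₁ <+: lbl t₂)) (h21 : ¬ (lbl t₂ <+: lbl t₁)) :
    Valid (join t₁ t₂) ∧
    (lbl (join t₁ t₂) <+: lbl t₁ ∧ lbl (join t₁ t₂) <+: lbl t₂ ∧
      ∀ c : List Bool, c <+: lbl t₁ → c <+: lbl t₂ → c <+: lbl (join t₁ t₂)) ∧
    leafLabels (join t₁ t₂) = leafLabels t₁ ∪ leafLabels t₂ := by
  have hlcp := (prefix_lcp_iff (c := lcp (lbl t₁) (lbl t₂))).mp (List.prefix_refl _)
  refine ⟨valid_join h1 h2 h12 h21, ?_, leafLabels_join t₁ t₂⟩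
  rw [lbl_join]
  exact ⟨hlcp.1, hlcp.2, fun c hc1 hc2 => prefix_lcp_iff.mpr ⟨hc1, hc2⟩⟩
end

section
/- Let `t` be a valid Patricia trie, `π` a position with `subtreeAt t π = some u`, and `u'` a valid trie. Suppose either `π = []`, or `π = π₀ ++ [i]` where `subtreeAt t π₀ = some p` and `lbl p ++ [i]` is a prefix of `lbl u'`. Then `replaceAt t π u'` is a valid trie. (The common validity argument behind all six cases in the paper's proof of Invariant 1.) -/
@[simp]
theorem replaceAt_nil (t u' : PTrie) : replaceAt t [] u' = u' := by
  cases t <;> rfl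

theorem lbl_replaceAt_of_ne_nil (t u' : PTrie) {π : List Bool} (hπ : π ≠ []) :
    lbl (replaceAt t π u') = lbl t := by
  match π, t with
  | [], _ => exact absurd rfl hπ
  | _ :: _, .leaf _ => rfl
  | false :: _, .node _ _ _ => rfl
  | true :: _, .node _ _ _ => rfl

/- Only one parent–child edge of the trie changes: the one from the node `p` at `π₀` to the
new child `u'`; every other replaced node keeps its label since its position is nonempty. -/
theorem Valid.replaceAt_append_singleton {t p u' : PTrie} {π₀ : List Bool} {i : Bool}
    (ht : Valid t) (hp : subtreeAt t π₀ = some p) (hu' : Valid u')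
    (hpu' : lbl p ++ [i] <+: lbl u') :
    Valid (replaceAt t (π₀ ++ [i]) u') := by
  induction π₀ generalizing t with
  | nil =>
    obtain rfl : t = p := Option.some.inj hp
    match t, i, ht with
    | .leaf _, _, _ => trivial
    | .node _ _ _, false, ⟨_, hr, _, vr⟩ => refine ⟨?_, hr, ?_, vr⟩ <;> rwa [replaceAt_nil]
    | .node _ _ _, true, ⟨hl, _, vl, _⟩ => refine ⟨hl, ?_, vl, ?_⟩ <;> rwa [replaceAt_nil]
  | cons b π₀ ih =>
    have hne : π₀ ++ [i] ≠ [] := List.append_ne_nil_of_right_ne_nil _ (List.cons_ne_nil _ _)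
    match t, b, ht with
    | .leaf _, _, _ => trivial
    | .node _ l _, false, ⟨hl, hr, vl, vr⟩ =>
      exact ⟨lbl_replaceAt_of_ne_nil l u' hne ▸ hl, hr, ih vl hp, vr⟩
    | .node _ _ r, true, ⟨hl, hr, vl, vr⟩ =>
      exact ⟨hl, lbl_replaceAt_of_ne_nil r u' hne ▸ hr, vl, ih vr hp⟩

theorem replaceAt_valid_general (t u' : PTrie) (π : List Bool)
    (hv : Valid t) (hv' : Valid u')
    (hcase : π = [] ∨ ∃ (π₀ : List Bool) (i : Bool) (p : PTrie),
        π = π₀ ++ [i] ∧ subtreeAt t π₀ = some p ∧ (lbl p ++ [i]) <+: lbl u') :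
    Valid (replaceAt t π u') := by
  rcases hcase with rfl | ⟨π₀, i, p, rfl, hp, hpu'⟩
  · rwa [replaceAt_nil]
  · exact hv.replaceAt_append_singleton hp hv' hpu'

/-- Replacing a subtree by a valid trie whose label suitably extends the
parent's label yields a valid trie (the common validity argument behind all
six cases of the paper's Invariant 1). -/
theorem replaceAt_valid (t u u' : PTrie) (π : List Bool)
    (hv : Valid t) (hsub : subtreeAt t π = some u) (hv' : Valid u')
    (hcase : π = [] ∨ ∃ (π₀ : List Bool) (i : Bool) (p : PTrie),
        π = π₀ ++ [i] ∧ subtreeAt t π₀ = some p ∧ (lbl p ++ [i]) <+: lbl u') :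
    Valid (replaceAt t π u') :=
  replaceAt_valid_general t u' π hv hv' hcase
end

section
/- Let `t` be a valid Patricia trie in which every leaf label has length `ℓ`, let `v_i : List Bool` with `|v_i| = ℓ` and `v_i ∉ leafLabels t`, and set `t' = insert v_i t`. Suppose `v_d ∈ leafLabels t` with `v_d ≠ v_i`, and `π` is a position with `subtreeAt t' π = some (node s c₀ c₁)` where for some bit `b` the child `c_b` equals `leaf v_d`; write `u'` for the other child. Then `replaceAt t' π u'` is valid and `leafLabels (replaceAt t' π u') = (leafLabels t \ {v_d}) ∪ {v_i}`. (Sequential content of the general case of the paper's replace operation, Lemma `successful-general-mov-lem`: the replace atomically deletes `v_d` and inserts `v_i`.) -/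
/-!
Inserting `vi` keeps the trie valid because all labels have the common length `ℓ`: wherever the
descent stops, the node label and `vi` are incomparable under `<+:`, so `join` applies. Replacing
the parent of the leaf `vd` by its sibling keeps validity, since the sibling's label extends the
parent's, and removes exactly `vd`, since the leaf sets of two siblings in a valid trie are
disjoint (their labels differ in the bit after the parent's label).
-/

theorem List.prefix_append_singleton_inj {α : Type*} {s x : List α} {c d : α}
    (hc : s ++ [c] <+: x) (hd : s ++ [d] <+: x) : c = d := by
  have := List.prefix_of_prefix_length_le hc hd (by simp)
  simpa using this.eq_of_length (by simp)

theorem List.getD_eq_of_append_singleton_prefix {α : Type*} {s x : List α} {c : α} (d : α)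
    (h : s ++ [c] <+: x) : x.getD s.length d = c := by
  obtain ⟨r, rfl⟩ := h
  simp

theorem List.append_getD_prefix {α : Type*} {s v : List α} (h : s <+: v) (hne : s ≠ v) (d : α) :
    s ++ [v.getD s.length d] <+: v := by
  obtain ⟨_ | ⟨c, r⟩, rfl⟩ := h
  · simp at hne
  · simp

theorem prefix_lcp {c : List Bool} : ∀ {a b : List Bool}, c <+: a → c <+: b → c <+: lcp a b := by
  induction c with
  | nil => exact fun _ _ => List.nil_prefix
  | cons d c ih =>
    rintro (_ | ⟨x, a⟩) (_ | ⟨y, b⟩) h₁ h₂ <;>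
      simp only [List.cons_prefix_cons, List.prefix_nil, reduceCtorEq] at h₁ h₂
    obtain ⟨rfl, h₁⟩ := h₁
    obtain ⟨rfl, h₂⟩ := h₂
    simpa [lcp] using ih h₁ h₂

theorem exists_lcp_append_prefix : ∀ {a b : List Bool}, ¬ a <+: b → ¬ b <+: a →
    ∃ c, lcp a b ++ [c] <+: a ∧ lcp a b ++ [!c] <+: b
  | x :: as, y :: bs, h₁, h₂ => by
    by_cases hxy : x = y
    · subst hxy
      obtain ⟨c, hc₁, hc₂⟩ := exists_lcp_append_prefix (a := as) (b := bs)
        (fun h => h₁ (List.cons_prefix_cons.mpr ⟨rfl, h⟩))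
        (fun h => h₂ (List.cons_prefix_cons.mpr ⟨rfl, h⟩))
      exact ⟨c, by simpa [lcp] using hc₁, by simpa [lcp] using hc₂⟩
    · refine ⟨x, by simp [lcp, hxy], ?_⟩
      obtain rfl : y = !x := by cases x <;> cases y <;> simp_all
      simp [lcp, hxy]
  | [], _, h, _ | _ :: _, [], _, h => absurd List.nil_prefix h

theorem leafLabels_nonempty : ∀ t : PTrie, (leafLabels t).Nonempty
  | .leaf s => ⟨s, rfl⟩
  | .node _ l _ => (leafLabels_nonempty l).mono Set.subset_union_left

theorem leafLabels_insertT (v : List Bool) (t : PTrie) :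
    leafLabels (insertT v t) = leafLabels t ∪ {v} := by
  induction t with
  | leaf s => exact leafLabels_join _ _
  | node s l r ihl ihr =>
    rw [insertT]
    split_ifs
    · simp only [leafLabels, ihr, Set.union_assoc]
    · simp only [leafLabels, ihl, Set.union_right_comm]
    · exact leafLabels_join _ _

theorem prefix_lbl_insertT {v c : List Bool} {t : PTrie} (ht : c <+: lbl t) (hv : c <+: v) :
    c <+: lbl (insertT v t) := by
  cases t with
  | leaf s => exact lbl_join _ _ ▸ prefix_lcp ht hv
  | node s l r =>
    rw [insertT]
    split_ifs
    exacts [ht, ht, lbl_join _ _ ▸ prefix_lcp ht hv]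

theorem lbl_replaceAt_cons (t : PTrie) (b : Bool) (π : List Bool) (u : PTrie) :
    lbl (replaceAt t (b :: π) u) = lbl t := by
  cases t with
  | leaf s => rfl
  | node s l r => cases b <;> rfl

theorem prefix_lbl_replaceAt {t w u : PTrie} {π : List Bool} (hw : subtreeAt t π = some w)
    (hu : lbl w <+: lbl u) : lbl t <+: lbl (replaceAt t π u) := by
  cases π with
  | nil => cases hw; rw [replaceAt]; exact hu
  | cons b π => rw [lbl_replaceAt_cons]

theorem leafLabels_subset_of_subtreeAt :
    ∀ {t w : PTrie} {π : List Bool}, subtreeAt t π = some w → leafLabels w ⊆ leafLabels t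
  | _, _, [], h => by cases h; rfl
  | .leaf _, _, _ :: _, h => by cases h
  | .node _ l _, _, false :: _, h =>
    (leafLabels_subset_of_subtreeAt (t := l) h).trans Set.subset_union_left
  | .node _ _ r, _, true :: _, h =>
    (leafLabels_subset_of_subtreeAt (t := r) h).trans Set.subset_union_right

namespace Valid

theorem lbl_prefix : ∀ {t : PTrie}, Valid t → ∀ x ∈ leafLabels t, lbl t <+: x
  | .leaf _, _, _, rfl => List.prefix_refl _
  | .node _ l r, ⟨hl, hr, vl, vr⟩, x, hx => by
    rcases hx with hx | hx
    · exact (List.prefix_append _ _).trans (hl.trans (vl.lbl_prefix x hx))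
    · exact (List.prefix_append _ _).trans (hr.trans (vr.lbl_prefix x hx))

theorem disjoint_leafLabels {s : List Bool} {l r : PTrie} (h : Valid (.node s l r)) :
    Disjoint (leafLabels l) (leafLabels r) :=
  Set.disjoint_left.mpr fun x hl hr => absurd
    (List.prefix_append_singleton_inj (h.1.trans (h.2.2.1.lbl_prefix x hl))
      (h.2.1.trans (h.2.2.2.lbl_prefix x hr))) Bool.false_ne_true

theorem of_subtreeAt : ∀ {t w : PTrie} {π : List Bool}, Valid t → subtreeAt t π = some w → Valid w
  | _, _, [], ht, h => by cases h; exact ht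
  | .leaf _, _, _ :: _, _, h => by cases h
  | .node _ l _, _, false :: _, ht, h => ht.2.2.1.of_subtreeAt (t := l) h
  | .node _ _ r, _, true :: _, ht, h => ht.2.2.2.of_subtreeAt (t := r) h

theorem leafLabels_replaceAt : ∀ {t w u : PTrie} {π : List Bool} {X : Set (List Bool)},
    Valid t → subtreeAt t π = some w → X ⊆ leafLabels w →
    leafLabels u = leafLabels w \ X → leafLabels (replaceAt t π u) = leafLabels t \ X
  | _, _, _, [], _, _, h, _, hu => by cases h; rw [replaceAt]; exact hu
  | .leaf _, _, _, _ :: _, _, _, h, _, _ => by cases h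
  | .node _ l r, _, _, false :: _, X, ht, h, hX, hu => by
    have hXr : Disjoint (leafLabels r) X := (ht.disjoint_leafLabels.mono_left
      (hX.trans (leafLabels_subset_of_subtreeAt (t := l) h))).symm
    simp only [replaceAt, leafLabels, Bool.false_eq_true, if_false,
      ht.2.2.1.leafLabels_replaceAt (t := l) h hX hu, Set.union_sdiff_distrib, hXr.sdiff_eq_left]
  | .node _ l r, _, _, true :: _, X, ht, h, hX, hu => by
    have hXl : Disjoint (leafLabels l) X := ht.disjoint_leafLabels.mono_right
      (hX.trans (leafLabels_subset_of_subtreeAt (t := r) h))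
    simp only [replaceAt, leafLabels, if_true,
      ht.2.2.2.leafLabels_replaceAt (t := r) h hX hu, Set.union_sdiff_distrib, hXl.sdiff_eq_left]

theorem replaceAt : ∀ {t w u : PTrie} {π : List Bool}, Valid t → subtreeAt t π = some w →
    Valid u → lbl w <+: lbl u → Valid (replaceAt t π u)
  | _, _, _, [], _, _, hu, _ => by rw [_root_.replaceAt]; exact hu
  | .leaf _, _, _, _ :: _, _, h, _, _ => by cases h
  | .node _ l _, _, _, false :: _, ⟨hl, hr, vl, vr⟩, h, hu, hwu =>
    ⟨hl.trans (prefix_lbl_replaceAt (t := l) h hwu), hr, vl.replaceAt h hu hwu, vr⟩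
  | .node _ _ r, _, _, true :: _, ⟨hl, hr, vl, vr⟩, h, hu, hwu =>
    ⟨hl, hr.trans (prefix_lbl_replaceAt (t := r) h hwu), vl, vr.replaceAt h hu hwu⟩

theorem join {t₁ t₂ : PTrie} (h₁ : Valid t₁) (h₂ : Valid t₂) (h₁₂ : ¬ lbl t₁ <+: lbl t₂)
    (h₂₁ : ¬ lbl t₂ <+: lbl t₁) : Valid (join t₁ t₂) := by
  obtain ⟨c, hc₁, hc₂⟩ := exists_lcp_append_prefix h₁₂ h₂₁
  rw [_root_.join, List.getD_eq_of_append_singleton_prefix true hc₁]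
  cases c
  · exact ⟨hc₁, hc₂, h₁, h₂⟩
  · exact ⟨hc₂, hc₁, h₂, h₁⟩

section Insert

variable {t : PTrie} {v : List Bool}

theorem not_prefix_lbl (ht : Valid t) (hlen : ∀ x ∈ leafLabels t, x.length = v.length)
    (hv : v ∉ leafLabels t) : ¬ v <+: lbl t := fun h => by
  obtain ⟨x, hx⟩ := leafLabels_nonempty t
  obtain rfl := (h.trans (ht.lbl_prefix x hx)).eq_of_length (hlen x hx).symm
  exact hv hx

theorem join_leaf (ht : Valid t) (hlen : ∀ x ∈ leafLabels t, x.length = v.length)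
    (hv : v ∉ leafLabels t) (hproper : ¬ (lbl t <+: v ∧ lbl t ≠ v)) :
    Valid (_root_.join t (.leaf v)) :=
  ht.join trivial
    (fun h => hproper ⟨h, fun heq => ht.not_prefix_lbl hlen hv (heq ▸ List.prefix_refl _)⟩)
    (ht.not_prefix_lbl hlen hv)

theorem insertT : ∀ {t : PTrie}, Valid t → (∀ x ∈ leafLabels t, x.length = v.length) →
    v ∉ leafLabels t → Valid (insertT v t)
  | .leaf s, ht, hlen, hv => by
    rw [_root_.insertT]
    exact ht.join_leaf hlen hv fun ⟨h, hne⟩ => hne (h.eq_of_length (hlen s rfl))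
  | .node s l r, ht@⟨hl, hr, vl, vr⟩, hlen, hv => by
    rw [_root_.insertT]
    split_ifs with hproper hbit
    · have hpre := List.append_getD_prefix hproper.1 hproper.2 false
      rw [hbit] at hpre
      exact ⟨hl, prefix_lbl_insertT hr hpre, vl,
        vr.insertT (fun x hx => hlen x (Or.inr hx)) (fun h => hv (Or.inr h))⟩
    · have hpre := List.append_getD_prefix hproper.1 hproper.2 false
      rw [Bool.eq_false_iff.mpr hbit] at hpre
      exact ⟨prefix_lbl_insertT hl hpre, hr,
        vl.insertT (fun x hx => hlen x (Or.inl hx)) (fun h => hv (Or.inl h)), vr⟩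
    · exact ht.join_leaf hlen hv hproper

end Insert

theorem sibling {s : List Bool} {c₀ c₁ : PTrie} (h : Valid (.node s c₀ c₁)) (b : Bool) :
    Valid (if b then c₀ else c₁) ∧ s <+: lbl (if b then c₀ else c₁) ∧
      leafLabels (if b then c₀ else c₁) =
        leafLabels (.node s c₀ c₁) \ leafLabels (if b then c₁ else c₀) := by
  have hdisj := h.disjoint_leafLabels
  obtain ⟨h₀, h₁, v₀, v₁⟩ := h
  cases b
  · exact ⟨v₁, (List.prefix_append _ _).trans h₁, hdisj.sup_sdiff_cancel_left.symm⟩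
  · exact ⟨v₀, (List.prefix_append _ _).trans h₀, hdisj.sup_sdiff_cancel_right.symm⟩

end Valid

theorem replace_general_correct_general (t : PTrie) (ℓ : ℕ) (hv : Valid t)
    (hleaf : ∀ s ∈ leafLabels t, s.length = ℓ)
    (vi vd : List Bool) (hvi : vi.length = ℓ) (hnotin : vi ∉ leafLabels t)
    (hne : vd ≠ vi)
    (π : List Bool) (s : List Bool) (c₀ c₁ : PTrie) (b : Bool)
    (hsub : subtreeAt (insertT vi t) π = some (PTrie.node s c₀ c₁))
    (hb : (if b then c₁ else c₀) = PTrie.leaf vd) :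
    Valid (replaceAt (insertT vi t) π (if b then c₀ else c₁)) ∧
    leafLabels (replaceAt (insertT vi t) π (if b then c₀ else c₁)) =
      (leafLabels t \ {vd}) ∪ {vi} := by
  have hins : Valid (insertT vi t) :=
    hv.insertT (fun x hx => (hleaf x hx).trans hvi.symm) hnotin
  obtain ⟨hsib, hlbl, hlabels⟩ := (hins.of_subtreeAt hsub).sibling b
  have hvd : {vd} ⊆ leafLabels (.node s c₀ c₁) := by
    rw [← leafLabels.eq_1, ← hb]
    exact leafLabels_subset_of_subtreeAt (π := [b]) (by cases b <;> rfl)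
  rw [hb, leafLabels.eq_1] at hlabels
  refine ⟨hins.replaceAt hsub hsib hlbl, ?_⟩
  rw [hins.leafLabels_replaceAt hsub hvd hlabels, leafLabels_insertT, Set.union_sdiff_distrib,
    Set.sdiff_singleton_eq_self (Set.notMem_singleton_iff.mpr hne)]

/-- Sequential content of the general case of the replace operation:
delete `v_d` from `insert v_i t`. -/
theorem replace_general_correct (t : PTrie) (ℓ : ℕ) (hv : Valid t)
    (hleaf : ∀ s ∈ leafLabels t, s.length = ℓ)
    (vi vd : List Bool) (hvi : vi.length = ℓ) (hnotin : vi ∉ leafLabels t)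
    (hvd : vd ∈ leafLabels t) (hne : vd ≠ vi)
    (π : List Bool) (s : List Bool) (c₀ c₁ : PTrie) (b : Bool)
    (hsub : subtreeAt (insertT vi t) π = some (PTrie.node s c₀ c₁))
    (hb : (if b then c₁ else c₀) = PTrie.leaf vd) :
    Valid (replaceAt (insertT vi t) π (if b then c₀ else c₁)) ∧
    leafLabels (replaceAt (insertT vi t) π (if b then c₀ else c₁)) =
      (leafLabels t \ {vd}) ∪ {vi} :=
  replace_general_correct_general t ℓ hv hleaf vi vd hvi hnotin hne π s c₀ c₁ b hsub hb
end
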